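/- arXiv:2509.02179 — 3 statements merged into one kernel-verified Lean document; each statement's English description precedes it below -/
import Mathlib

section
/- The function E defined by E(X) = |alph(U)|, where U is the longest suffix of X[1..|X|-1] not containing the letter X[|X|], is an encoding function for parameterized matching: two strings X, Y satisfy X parameterized-matches Y if and only if |X| = |Y| and E(X[1..i]) = E(Y[1..i]) for all i ∈ [1..|X|]. -/
/-- The set of distinct characters of a string. -/
def alph (X : List ℤ) : Set ℤ := {a | a ∈ X}

/-- Parameterized matching: equal lengths and a bijection between alphabets
mapping one string onto the other. -/
def PMatch (X Y : List ℤ) : Prop :=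
  X.length = Y.length ∧ ∃ f : ℤ → ℤ, Set.BijOn f (alph X) (alph Y) ∧ X.map f = Y

/-- E(X) = number of distinct characters of the longest suffix of X[1..|X|-1]
that does not contain the character X[|X|]; 0 for the empty string. -/
def Efun (X : List ℤ) : ℤ :=
  match X.getLast? with
  | none => 0
  | some c => ((X.dropLast.reverse.takeWhile (fun a => a != c)).dedup.length : ℤ)

namespace EfunAux

/-- The "same positions are equal" relation. -/
def Rel (L M : List ℤ) : Prop :=
  ∀ i j, i < L.length → j < L.length →
    (L.getD i 0 = L.getD j 0 ↔ M.getD i 0 = M.getD j 0)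

lemma takeWhile_congr {p q : ℤ → Bool} {l : List ℤ} (h : ∀ a ∈ l, p a = q a) :
    l.takeWhile p = l.takeWhile q := by
  induction l with
  | nil => rfl
  | cons x xs ih =>
    simp only [List.takeWhile_cons, h x (by simp)]
    cases q x <;> simp [ih (fun a ha => h a (by simp [ha]))]

lemma toFinset_map (l : List ℤ) (f : ℤ → ℤ) :
    (l.map f).toFinset = l.toFinset.image f := by
  ext a; simp

lemma rel_pmatch {L M : List ℤ} (hlen : L.length = M.length) (hrel : Rel L M) :
    PMatch L M := by
  classical
  refine ⟨hlen, fun a => M.getD (L.idxOf a) 0, ?_, ?_⟩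
  · have hgd : ∀ i (hi : i < L.length), L.getD i 0 = L[i]'hi :=
      fun i hi => L.getD_eq_getElem 0 hi
    have hgd' : ∀ i (hi : i < L.length), M.getD i 0 = M[i]'(hlen ▸ hi) :=
      fun i hi => M.getD_eq_getElem 0 (hlen ▸ hi)
    refine ⟨?_, ?_, ?_⟩
    · intro a ha
      have ha' : a ∈ L := ha
      have hk : L.idxOf a < L.length := List.idxOf_lt_length_iff.2 ha'
      show M.getD (L.idxOf a) 0 ∈ alph M
      rw [hgd' _ hk]
      exact List.getElem_mem _
    · intro a ha b hb hfab
      have ha' : a ∈ L := ha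
      have hb' : b ∈ L := hb
      have hka : L.idxOf a < L.length := List.idxOf_lt_length_iff.2 ha'
      have hkb : L.idxOf b < L.length := List.idxOf_lt_length_iff.2 hb'
      have h1 : M.getD (L.idxOf a) 0 = M.getD (L.idxOf b) 0 := hfab
      have h2 : L.getD (L.idxOf a) 0 = L.getD (L.idxOf b) 0 :=
        (hrel _ _ hka hkb).2 h1
      rw [hgd _ hka, hgd _ hkb, List.getElem_idxOf hka, List.getElem_idxOf hkb] at h2
      exact h2
    · intro b hb
      have hb' : b ∈ M := hb
      obtain ⟨j, hj, hbj⟩ := List.mem_iff_getElem.1 hb'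
      have hjL : j < L.length := by omega
      refine ⟨L[j]'hjL, List.getElem_mem _, ?_⟩
      have hk : L.idxOf (L[j]'hjL) < L.length :=
        List.idxOf_lt_length_iff.2 (List.getElem_mem _)
      have h2 : L.getD (L.idxOf (L[j]'hjL)) 0 = L.getD j 0 := by
        rw [hgd _ hk, hgd _ hjL, List.getElem_idxOf hk]
      have h3 : M.getD (L.idxOf (L[j]'hjL)) 0 = M.getD j 0 :=
        (hrel _ _ hk hjL).1 h2
      show M.getD (L.idxOf (L[j]'hjL)) 0 = b
      rw [h3, hgd' _ hjL, hbj]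
  · refine List.ext_getElem (by simpa using hlen) (fun n h1 h2 => ?_)
    have hn : n < L.length := by simpa using h1
    rw [List.getElem_map]
    have hk : L.idxOf (L[n]'hn) < L.length :=
      List.idxOf_lt_length_iff.2 (List.getElem_mem _)
    have h2' : L.getD (L.idxOf (L[n]'hn)) 0 = L.getD n 0 := by
      rw [L.getD_eq_getElem 0 hk, L.getD_eq_getElem 0 hn, List.getElem_idxOf hk]
    have h3 : M.getD (L.idxOf (L[n]'hn)) 0 = M.getD n 0 :=
      (hrel _ _ hk hn).1 h2'
    show M.getD (L.idxOf (L[n]'hn)) 0 = M[n]'h2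
    rw [h3, M.getD_eq_getElem 0 (show n < M.length by rw [← hlen]; exact hn)]

lemma dedup_len_eq {L M : List ℤ} (hlen : L.length = M.length) (hrel : Rel L M) :
    L.dedup.length = M.dedup.length := by
  classical
  obtain ⟨-, f, hbij, hmap⟩ := rel_pmatch hlen hrel
  have h1 : M.toFinset = L.toFinset.image f := by rw [← hmap, toFinset_map]
  have h2 : Set.InjOn f ↑L.toFinset := by
    have : (↑L.toFinset : Set ℤ) = alph L := by ext a; simp [alph]
    rw [this]; exact hbij.injOn
  rw [← List.card_toFinset, ← List.card_toFinset, h1, Finset.card_image_of_injOn h2]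

lemma rel_take {L M : List ℤ} (hlen : L.length = M.length) (hrel : Rel L M) (k : ℕ) :
    Rel (L.take k) (M.take k) := by
  intro i j hi hj
  simp only [List.length_take] at hi hj
  have hi' : i < L.length := lt_of_lt_of_le hi (min_le_right _ _)
  have hj' : j < L.length := lt_of_lt_of_le hj (min_le_right _ _)
  have e1 : (L.take k).getD i 0 = L.getD i 0 := by
    rw [(L.take k).getD_eq_getElem 0 (by simp [List.length_take]; omega),
      L.getD_eq_getElem 0 hi', List.getElem_take]
  have e2 : (L.take k).getD j 0 = L.getD j 0 := by
    rw [(L.take k).getD_eq_getElem 0 (by simp [List.length_take]; omega),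
      L.getD_eq_getElem 0 hj', List.getElem_take]
  have e3 : (M.take k).getD i 0 = M.getD i 0 := by
    rw [(M.take k).getD_eq_getElem 0 (by simp [List.length_take]; omega),
      M.getD_eq_getElem 0 (show i < M.length by omega), List.getElem_take]
  have e4 : (M.take k).getD j 0 = M.getD j 0 := by
    rw [(M.take k).getD_eq_getElem 0 (by simp [List.length_take]; omega),
      M.getD_eq_getElem 0 (show j < M.length by omega), List.getElem_take]
  rw [e1, e2, e3, e4]
  exact hrel i j hi' hj'

lemma rel_reverse {L M : List ℤ} (hlen : L.length = M.length) (hrel : Rel L M) :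
    Rel L.reverse M.reverse := by
  intro i j hi hj
  simp only [List.length_reverse] at hi hj
  have e1 : L.reverse.getD i 0 = L.getD (L.length - 1 - i) 0 := by
    rw [L.reverse.getD_eq_getElem 0 (by simpa using hi), L.getD_eq_getElem 0 (by omega),
      List.getElem_reverse]
  have e2 : L.reverse.getD j 0 = L.getD (L.length - 1 - j) 0 := by
    rw [L.reverse.getD_eq_getElem 0 (by simpa using hj), L.getD_eq_getElem 0 (by omega),
      List.getElem_reverse]
  have e3 : M.reverse.getD i 0 = M.getD (L.length - 1 - i) 0 := by
    rw [M.reverse.getD_eq_getElem 0 (by simp; omega),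
      M.getD_eq_getElem 0 (show L.length - 1 - i < M.length by omega),
      List.getElem_reverse]
    congr 1; omega
  have e4 : M.reverse.getD j 0 = M.getD (L.length - 1 - j) 0 := by
    rw [M.reverse.getD_eq_getElem 0 (by simp; omega),
      M.getD_eq_getElem 0 (show L.length - 1 - j < M.length by omega),
      List.getElem_reverse]
    congr 1; omega
  rw [e1, e2, e3, e4]
  exact hrel _ _ (by omega) (by omega)

/-- takeWhile fails at the first index past its length. -/
lemma takeWhile_getD_false (q : ℤ → Bool) :
    ∀ (l : List ℤ), (l.takeWhile q).length < l.length →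
      q (l.getD (l.takeWhile q).length 0) = false := by
  intro l
  induction l with
  | nil => intro h; simp at h
  | cons x xs ih =>
    intro h
    by_cases hq : q x
    · simp only [List.takeWhile_cons, hq, if_true] at h ⊢
      simp only [List.length_cons] at h
      simpa using ih (by omega)
    · simp only [List.takeWhile_cons, hq] at h ⊢
      simp [eq_false_of_ne_true hq]

lemma takeWhile_getD_true (q : ℤ → Bool) (l : List ℤ) {j : ℕ}
    (hj : j < (l.takeWhile q).length) : q (l.getD j 0) = true := by
  have hpre : l.takeWhile q <+: l := List.takeWhile_prefix q
  have hlen : (l.takeWhile q).length ≤ l.length := hpre.length_le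
  have hjl : j < l.length := by omega
  have h1 : l.getD j 0 = (l.takeWhile q)[j]'hj := by
    rw [l.getD_eq_getElem 0 hjl]
    exact (hpre.getElem hj).symm
  rw [h1]
  exact List.mem_takeWhile_imp (List.getElem_mem hj)

lemma dedup_take_lt {R : List ℤ} {k : ℕ} (hk : k < R.length)
    (hnot : R[k]'hk ∉ R.take k) :
    (R.take k).dedup.length < (R.take (k + 1)).dedup.length := by
  classical
  have hsucc : R.take (k + 1) = R.take k ++ [R[k]'hk] := by
    rw [List.take_succ, List.getElem?_eq_getElem hk]; rfl
  have hsub : (R.take k).toFinset ⊂ (R.take (k + 1)).toFinset := by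
    constructor
    · intro a ha
      rw [hsucc]
      simp only [List.toFinset_append, Finset.mem_union]
      exact Or.inl ha
    · intro hcon
      have hmem : R[k]'hk ∈ (R.take (k+1)).toFinset := by
        rw [List.mem_toFinset, hsucc]
        exact List.mem_append_right _ (by simp)
      exact hnot (List.mem_toFinset.1 (hcon hmem))
  rw [← List.card_toFinset, ← List.card_toFinset]
  exact Finset.card_lt_card hsub

lemma dedup_take_mono (R : List ℤ) {k m : ℕ} (hkm : k ≤ m) :
    (R.take k).dedup.length ≤ (R.take m).dedup.length := by
  classical
  rw [← List.card_toFinset, ← List.card_toFinset]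
  apply Finset.card_le_card
  intro a ha
  simp only [List.mem_toFinset] at ha ⊢
  have : R.take k = (R.take m).take k := by rw [List.take_take, min_eq_left hkm]
  rw [this] at ha
  exact List.take_subset _ _ ha

/-- Key lemma: in the reversed world, equality of the encodings forces the
"equals last letter" positions to coincide. -/
lemma key {R S : List ℤ} (c d : ℤ) (hlen : R.length = S.length) (hrel : Rel R S)
    (hE : (R.takeWhile (fun a => a != c)).dedup.length =
          (S.takeWhile (fun a => a != d)).dedup.length) :
    ∀ j, j < R.length → (R.getD j 0 = c ↔ S.getD j 0 = d) := by
  classical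
  set p := (R.takeWhile (fun a => a != c)).length with hp
  set q := (S.takeWhile (fun a => a != d)).length with hq
  have hpreR : R.takeWhile (fun a => a != c) <+: R := List.takeWhile_prefix _
  have hpreS : S.takeWhile (fun a => a != d) <+: S := List.takeWhile_prefix _
  have hpR : p ≤ R.length := hpreR.length_le
  have hqS : q ≤ S.length := hpreS.length_le
  have heqR : R.takeWhile (fun a => a != c) = R.take p := List.prefix_iff_eq_take.1 hpreR
  have heqS : S.takeWhile (fun a => a != d) = S.take q := List.prefix_iff_eq_take.1 hpreS
  have hE' : (R.take p).dedup.length = (S.take q).dedup.length := by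
    rw [← heqR, ← heqS]; exact hE
  -- dedup lengths of corresponding takes agree
  have hDeq : ∀ k, (R.take k).dedup.length = (S.take k).dedup.length := by
    intro k
    exact dedup_len_eq (by simp [hlen]) (rel_take hlen hrel k)
  -- elements strictly before p are ≠ c, and similarly for q
  have hbefR : ∀ j, j < p → R.getD j 0 ≠ c := by
    intro j hj
    have := takeWhile_getD_true (fun a => a != c) R hj
    simpa using this
  have hbefS : ∀ j, j < q → S.getD j 0 ≠ d := by
    intro j hj
    have := takeWhile_getD_true (fun a => a != d) S hj
    simpa using this
  -- getD/getElem translation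
  have hgR : ∀ j (h : j < R.length), R.getD j 0 = R[j]'h :=
    fun j h => R.getD_eq_getElem 0 h
  have hgS : ∀ j (h : j < S.length), S.getD j 0 = S[j]'h :=
    fun j h => S.getD_eq_getElem 0 h
  -- not-mem of takes
  have hnotR : ∀ k (h : k < R.length), (∀ j, j < k → R.getD j 0 ≠ R.getD k 0) →
      R[k]'h ∉ R.take k := by
    intro k h hall hmem
    obtain ⟨j, hj, hje⟩ := List.mem_iff_getElem.1 hmem
    simp only [List.length_take] at hj
    have hjR : j < R.length := lt_of_lt_of_le hj (min_le_right _ _)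
    rw [List.getElem_take] at hje
    exact hall j (lt_of_lt_of_le hj (min_le_left _ _))
      (by rw [hgR j hjR, hgR k h, hje])
  have hnotS : ∀ k (h : k < S.length), (∀ j, j < k → S.getD j 0 ≠ S.getD k 0) →
      S[k]'h ∉ S.take k := by
    intro k h hall hmem
    obtain ⟨j, hj, hje⟩ := List.mem_iff_getElem.1 hmem
    simp only [List.length_take] at hj
    have hjS : j < S.length := lt_of_lt_of_le hj (min_le_right _ _)
    rw [List.getElem_take] at hje
    exact hall j (lt_of_lt_of_le hj (min_le_left _ _))
      (by rw [hgS j hjS, hgS k h, hje])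
  rcases lt_or_eq_of_le hpR with hplt | hpeq
  · -- c occurs in R, at (first) position p
    have hRp : R.getD p 0 = c := by
      have := takeWhile_getD_false (fun a => a != c) R (by rw [← hp]; exact hplt)
      simpa using this
    rcases lt_or_eq_of_le hqS with hqlt | hqeq
    · -- d occurs in S, at position q; show p = q
      have hSq : S.getD q 0 = d := by
        have := takeWhile_getD_false (fun a => a != d) S (by rw [← hq]; exact hqlt)
        simpa using this
      have hpq : p = q := by
        by_contra hne
        rcases lt_or_gt_of_ne hne with h1 | h1
        · -- p < q : S[p] ∉ S.take p gives strict growth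
          have hpSlen : p < S.length := by omega
          have hSp_not : S[p]'hpSlen ∉ S.take p := by
            apply hnotS p hpSlen
            intro j hj hcon
            have hjR : j < R.length := by omega
            have : R.getD j 0 = R.getD p 0 :=
              (hrel j p hjR (by omega)).2 hcon
            exact hbefR j hj (by rw [this, hRp])
          have h2 : (S.take p).dedup.length < (S.take (p+1)).dedup.length :=
            dedup_take_lt hpSlen hSp_not
          have h3 : (S.take (p+1)).dedup.length ≤ (S.take q).dedup.length :=
            dedup_take_mono S (by omega)
          have h4 : (R.take p).dedup.length = (S.take p).dedup.length := hDeq p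
          omega
        · -- q < p : R[q] ∉ R.take q gives strict growth
          have hqRlen : q < R.length := by omega
          have hRq_not : R[q]'hqRlen ∉ R.take q := by
            apply hnotR q hqRlen
            intro j hj hcon
            have hjR : j < R.length := by omega
            have : S.getD j 0 = S.getD q 0 :=
              (hrel j q hjR hqRlen).1 hcon
            exact hbefS j hj (by rw [this, hSq])
          have h2 : (R.take q).dedup.length < (R.take (q+1)).dedup.length :=
            dedup_take_lt hqRlen hRq_not
          have h3 : (R.take (q+1)).dedup.length ≤ (R.take p).dedup.length :=
            dedup_take_mono R (by omega)
          have h4 : (R.take q).dedup.length = (S.take q).dedup.length := hDeq q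
          omega
      -- with p = q, transfer via the relation
      intro j hj
      constructor
      · intro hjc
        have h1 : R.getD j 0 = R.getD p 0 := by rw [hjc, hRp]
        have h2 : S.getD j 0 = S.getD p 0 := (hrel j p hj hplt).1 h1
        rw [h2, hpq]; exact hSq
      · intro hjd
        have h1 : S.getD j 0 = S.getD q 0 := by rw [hjd, hSq]
        have h2 : R.getD j 0 = R.getD q 0 := (hrel j q hj (by omega)).2 h1
        rw [h2, ← hpq]; exact hRp
    · -- d does not occur in S : contradiction
      exfalso
      have hdS : ∀ a ∈ S, a ≠ d := by
        intro a ha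
        have : a ∈ S.takeWhile (fun a => a != d) := by
          rw [heqS, hqeq, List.take_length]; exact ha
        have := List.mem_takeWhile_imp this
        simpa using this
      -- R[p] = c ∉ R.take p
      have hRp_not : R[p]'hplt ∉ R.take p := by
        apply hnotR p hplt
        intro j hj hcon
        exact hbefR j hj (by rw [hcon, hRp])
      have h2 : (R.take p).dedup.length < (R.take (p+1)).dedup.length :=
        dedup_take_lt hplt hRp_not
      have h3 : (R.take (p+1)).dedup.length ≤ (R.take R.length).dedup.length :=
        dedup_take_mono R (by omega)
      have h4 : (R.take R.length).dedup.length = (S.take S.length).dedup.length := by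
        rw [List.take_length, List.take_length]
        exact dedup_len_eq hlen hrel
      have h5 : (S.take q).dedup.length = (S.take S.length).dedup.length := by
        rw [hqeq]
      omega
  · -- c does not occur in R
    have hcR : ∀ a ∈ R, a ≠ c := by
      intro a ha
      have : a ∈ R.takeWhile (fun a => a != c) := by
        rw [heqR, hpeq, List.take_length]; exact ha
      have := List.mem_takeWhile_imp this
      simpa using this
    rcases lt_or_eq_of_le hqS with hqlt | hqeq
    · -- d occurs in S : contradiction
      exfalso
      have hSq : S.getD q 0 = d := by
        have := takeWhile_getD_false (fun a => a != d) S (by rw [← hq]; exact hqlt)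
        simpa using this
      have hSq_not : S[q]'hqlt ∉ S.take q := by
        apply hnotS q hqlt
        intro j hj hcon
        exact hbefS j hj (by rw [hcon, hSq])
      have h2 : (S.take q).dedup.length < (S.take (q+1)).dedup.length :=
        dedup_take_lt hqlt hSq_not
      have h3 : (S.take (q+1)).dedup.length ≤ (S.take S.length).dedup.length :=
        dedup_take_mono S (by omega)
      have h4 : (R.take R.length).dedup.length = (S.take S.length).dedup.length := by
        rw [List.take_length, List.take_length]
        exact dedup_len_eq hlen hrel
      have h5 : (R.take p).dedup.length = (R.take R.length).dedup.length := by
        rw [hpeq]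
      omega
    · -- neither occurs : both sides false
      have hdS : ∀ a ∈ S, a ≠ d := by
        intro a ha
        have : a ∈ S.takeWhile (fun a => a != d) := by
          rw [heqS, hqeq, List.take_length]; exact ha
        have := List.mem_takeWhile_imp this
        simpa using this
      intro j hj
      constructor
      · intro hjc
        exfalso
        have : R.getD j 0 ∈ R := by rw [hgR j hj]; exact List.getElem_mem _
        exact hcR _ this hjc
      · intro hjd
        exfalso
        have : S.getD j 0 ∈ S := by rw [hgS j (by omega)]; exact List.getElem_mem _
        exact hdS _ this hjd

/-- Efun of a concatenation with a single letter. -/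
lemma Efun_concat (L : List ℤ) (c : ℤ) :
    Efun (L ++ [c]) = ((L.reverse.takeWhile (fun a => a != c)).dedup.length : ℤ) := by
  unfold Efun
  rw [List.getLast?_concat, List.dropLast_concat]

/-- Core: prefix-equality of Efun implies the relation on all prefixes. -/
lemma core {X Y : List ℤ} (hlen : X.length = Y.length)
    (hE : ∀ i, 1 ≤ i → i ≤ X.length → Efun (X.take i) = Efun (Y.take i)) :
    ∀ n, n ≤ X.length → Rel (X.take n) (Y.take n) := by
  intro n
  induction n with
  | zero => intro _ i j hi hj; simp at hi
  | succ n ih =>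
    intro hn1
    have hnX : n < X.length := by omega
    have hnY : n < Y.length := by omega
    have IH : Rel (X.take n) (Y.take n) := ih (by omega)
    have hlen' : (X.take n).length = (Y.take n).length := by simp [hlen]
    -- decompose take (n+1)
    have hXs : X.take (n + 1) = X.take n ++ [X.getD n 0] := by
      rw [List.take_succ, List.getElem?_eq_getElem hnX, X.getD_eq_getElem 0 hnX]; rfl
    have hYs : Y.take (n + 1) = Y.take n ++ [Y.getD n 0] := by
      rw [List.take_succ, List.getElem?_eq_getElem hnY, Y.getD_eq_getElem 0 hnY]; rfl
    set c := X.getD n 0 with hc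
    set d := Y.getD n 0 with hd
    have hEn := hE (n + 1) (by omega) (by omega)
    rw [hXs, hYs, Efun_concat, Efun_concat] at hEn
    have hEn' : ((X.take n).reverse.takeWhile (fun a => a != c)).dedup.length =
        ((Y.take n).reverse.takeWhile (fun a => a != d)).dedup.length := by
      exact_mod_cast hEn
    have hrelrev : Rel (X.take n).reverse (Y.take n).reverse :=
      rel_reverse hlen' IH
    have hkey := key c d (by simp [hlen]) hrelrev hEn'
    -- translate the key fact back to un-reversed prefixes
    have hlast : ∀ j, j < n → ((X.take n).getD j 0 = c ↔ (Y.take n).getD j 0 = d) := by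
      intro j hj
      have hjlen : (X.take n).length = n := by simp; omega
      have hjlenY : (Y.take n).length = n := by simp; omega
      have hjrev : n - 1 - j < (X.take n).reverse.length := by simp; omega
      have e1 : (X.take n).reverse.getD (n - 1 - j) 0 = (X.take n).getD j 0 := by
        rw [(X.take n).reverse.getD_eq_getElem 0 hjrev,
          (X.take n).getD_eq_getElem 0 (by omega : j < (X.take n).length),
          List.getElem_reverse]
        congr 1; omega
      have e2 : (Y.take n).reverse.getD (n - 1 - j) 0 = (Y.take n).getD j 0 := by
        rw [(Y.take n).reverse.getD_eq_getElem 0 (by simp; omega),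
          (Y.take n).getD_eq_getElem 0 (by simp; omega : j < (Y.take n).length),
          List.getElem_reverse]
        congr 1; omega
      have := hkey (n - 1 - j) (by simp; omega)
      rw [e1, e2] at this
      exact this
    -- now prove the relation for take (n+1)
    intro i j hi hj
    have hilen : i < n + 1 := by simp at hi; omega
    have hjlen : j < n + 1 := by simp at hj; omega
    have hiX : i < X.length := by omega
    have hjX : j < X.length := by omega
    have hiY : i < Y.length := by omega
    have hjY : j < Y.length := by omega
    -- getD of take (n+1) is getD of the original
    have gX : ∀ k, k < n + 1 → (k < X.length) → (X.take (n+1)).getD k 0 = X.getD k 0 := by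
      intro k hk hkX
      rw [(X.take (n+1)).getD_eq_getElem 0 (by simp; omega),
        X.getD_eq_getElem 0 hkX, List.getElem_take]
    have gY : ∀ k, k < n + 1 → (k < Y.length) → (Y.take (n+1)).getD k 0 = Y.getD k 0 := by
      intro k hk hkY
      rw [(Y.take (n+1)).getD_eq_getElem 0 (by simp; omega),
        Y.getD_eq_getElem 0 hkY, List.getElem_take]
    have gXn : ∀ k, k < n → (X.take n).getD k 0 = X.getD k 0 := by
      intro k hk
      rw [(X.take n).getD_eq_getElem 0 (by simp; omega),
        X.getD_eq_getElem 0 (show k < X.length by omega), List.getElem_take]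
    have gYn : ∀ k, k < n → (Y.take n).getD k 0 = Y.getD k 0 := by
      intro k hk
      rw [(Y.take n).getD_eq_getElem 0 (by simp; omega),
        Y.getD_eq_getElem 0 (show k < Y.length by omega), List.getElem_take]
    rw [gX i hilen hiX, gX j hjlen hjX, gY i hilen hiY, gY j hjlen hjY]
    rcases Nat.lt_or_ge i n with hin | hin
    · rcases Nat.lt_or_ge j n with hjn | hjn
      · have h := IH i j (by simp; omega) (by simp; omega)
        rw [gXn i hin, gXn j hjn, gYn i hin, gYn j hjn] at h
        exact h
      · have hjn' : j = n := by omega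
        have h := hlast i hin
        rw [gXn i hin, gYn i hin] at h
        rw [hjn', ← hc, ← hd]
        exact h
    · have hin' : i = n := by omega
      rcases Nat.lt_or_ge j n with hjn | hjn
      · have h := hlast j hjn
        rw [gXn j hjn, gYn j hjn] at h
        rw [hin', ← hc, ← hd]
        exact ⟨fun hh => (h.1 hh.symm).symm, fun hh => (h.2 hh.symm).symm⟩
      · have hjn' : j = n := by omega
        rw [hin', hjn']
        exact ⟨fun _ => rfl, fun _ => rfl⟩

lemma Efun_eq_of_getLast (L : List ℤ) (c : ℤ) (h : L.getLast? = some c) :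
    Efun L = ((L.dropLast.reverse.takeWhile (fun a => a != c)).dedup.length : ℤ) := by
  unfold Efun
  rw [h]

/-- Forward: Efun is invariant under injective renaming. -/
lemma Efun_map {f : ℤ → ℤ} {L : List ℤ} (hf : Set.InjOn f (alph L)) :
    Efun (L.map f) = Efun L := by
  classical
  rcases hL : L.getLast? with _ | c
  · have hnil : L = [] := by
      by_contra hne
      have hs : L.getLast?.isSome := List.getLast?_isSome.mpr hne
      rw [hL] at hs
      simp at hs
    subst hnil
    rfl
  · have hcL : c ∈ L := by
      have := List.mem_of_mem_getLast? (l := L) (a := c) ?_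
      · exact this
      · rw [hL]; rfl
    have hmap : (L.map f).getLast? = some (f c) := by
      rw [List.getLast?_map, hL]; rfl
    rw [Efun_eq_of_getLast _ _ hmap, Efun_eq_of_getLast _ _ hL, Nat.cast_inj]
    have hdl : (L.map f).dropLast = L.dropLast.map f := by
      rw [List.dropLast_eq_take, List.dropLast_eq_take, List.length_map, List.map_take]
    rw [hdl, ← List.map_reverse]
    set R := L.dropLast.reverse with hR
    have hRsub : ∀ a ∈ R, a ∈ L := by
      intro a ha
      rw [hR, List.mem_reverse] at ha
      exact List.dropLast_sublist L |>.mem ha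
    have htw : (R.map f).takeWhile (fun a => a != f c) =
        (R.takeWhile (fun a => a != c)).map f := by
      rw [List.takeWhile_map]
      congr 1
      apply takeWhile_congr
      intro a ha
      have haL : a ∈ L := hRsub a ha
      show (f a != f c) = (a != c)
      by_cases hac : a = c
      · subst hac; simp
      · have hfa : f a ≠ f c := fun hcon => hac (hf haL hcL hcon)
        rw [show (f a != f c) = true from by simpa using hfa,
          show (a != c) = true from by simpa using hac]
    rw [htw]
    set T := R.takeWhile (fun a => a != c) with hT
    have hTsub : ∀ a ∈ T, a ∈ L := by
      intro a ha
      exact hRsub a ((List.takeWhile_prefix _).sublist.subset ha)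
    rw [← List.card_toFinset, ← List.card_toFinset, toFinset_map]
    rw [Finset.card_image_of_injOn]
    intro a ha b hb hab
    simp only [Finset.coe_insert, Set.mem_insert_iff, List.coe_toFinset, Set.mem_setOf_eq] at ha hb
    exact hf (hTsub a ha) (hTsub b hb) hab

end EfunAux

/-- Efun is an encoding function for parameterized matching. -/
theorem Efun_encoding_function_for_pmatch (X Y : List ℤ) :
    PMatch X Y ↔ (X.length = Y.length ∧
      ∀ i, 1 ≤ i → i ≤ X.length → Efun (X.take i) = Efun (Y.take i)) := by
  constructor
  · rintro ⟨hlen, f, hbij, hmap⟩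
    refine ⟨hlen, fun i _ _ => ?_⟩
    have h1 : (X.take i).map f = Y.take i := by
      rw [List.map_take, hmap]
    have h2 : Set.InjOn f (alph (X.take i)) := by
      apply Set.InjOn.mono _ hbij.injOn
      intro a ha
      exact List.take_subset i X ha
    rw [← h1, EfunAux.Efun_map h2]
  · rintro ⟨hlen, hE⟩
    have hrel := EfunAux.core hlen hE X.length (le_refl _)
    rw [List.take_length] at hrel
    have : Y.take X.length = Y := by rw [hlen, List.take_length]
    rw [this] at hrel
    exact EfunAux.rel_pmatch hlen hrel
end

section
/- Let T be a string over an alphabet of size σ and suppose T[i..i+2ℓ) is a parameterized square (i.e., T[i..i+ℓ) parameterized matches T[i+ℓ..i+2ℓ)). Define the string R of the same length as T by R[j] = E(T[1..j]), where E(X) is the number of distinct characters in the longest suffix of X[1..|X|-1] avoiding the letter X[|X|]. Then R[i..i+2ℓ) is a σ-mismatch square, i.e., the Hamming distance between R[i..i+ℓ) and R[i+ℓ..i+2ℓ) is at most σ. -/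
/-- The substring T[i..i+len) for a 1-indexed position i. -/
def seg (T : List ℤ) (i len : ℕ) : List ℤ := (T.drop (i - 1)).take len

/-- Hamming distance of two equal-length strings. -/
def hamming (X Y : List ℤ) : ℕ :=
  ((Finset.range X.length).filter (fun j => X.getD j 0 ≠ Y.getD j 0)).card

namespace List

variable {α β : Type*}

theorem takeWhile_congr {p q : α → Bool} {l : List α} (h : ∀ x ∈ l, p x = q x) :
    l.takeWhile p = l.takeWhile q := by
  induction l with
  | nil => rfl
  | cons x xs ih =>
    simp only [mem_cons, forall_eq_or_imp] at h
    simp only [takeWhile_cons, h.1, ih h.2]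

theorem takeWhile_append_of_exists_not {p : α → Bool} {xs : List α} (ys : List α)
    (h : ∃ x ∈ xs, ¬p x) : (xs ++ ys).takeWhile p = xs.takeWhile p := by
  induction xs with
  | nil => simp at h
  | cons x xs ih =>
    by_cases hx : p x
    · have h' : ∃ y ∈ xs, ¬p y := by
        obtain ⟨y, hy, hpy⟩ := h
        exact ⟨y, (mem_cons.1 hy).resolve_left (by rintro rfl; exact hpy hx), hpy⟩
      simp [hx, ih h']
    · simp [hx]

theorem length_dedup_map_of_injOn [DecidableEq α] [DecidableEq β] {f : α → β} {l : List α}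
    (hf : Set.InjOn f {x | x ∈ l}) : (l.map f).dedup.length = l.dedup.length := by
  have himage : (l.map f).toFinset = l.toFinset.image f := by ext; simp
  rw [← card_toFinset, ← card_toFinset, himage, Finset.card_image_of_injOn]
  simpa using hf

theorem card_filter_getD_notMem_take_le [DecidableEq α] (X : List α) (d : α) :
    ((Finset.range X.length).filter fun j => X.getD j d ∉ X.take j).card ≤ X.toFinset.card := by
  have hmem_take {j k : ℕ} (hjk : j < k) (hk : k < X.length) : X.getD j d ∈ X.take k := by
    rw [getD_eq_getElem _ d (by omega)]
    exact mem_take_iff_getElem.2 ⟨j, by omega, rfl⟩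
  apply Finset.card_le_card_of_injOn (fun j => X.getD j d)
  · intro j hj
    rw [Finset.coe_filter, Set.mem_ofPred, Finset.mem_range] at hj
    beta_reduce
    rw [Finset.mem_coe, mem_toFinset, getD_eq_getElem X d hj.1]
    exact getElem_mem _
  · intro j hj k hk (hjk : X.getD j d = X.getD k d)
    rw [Finset.coe_filter, Set.mem_ofPred, Finset.mem_range] at hj hk
    rcases lt_trichotomy j k with hlt | heq | hlt
    · exact absurd (hjk ▸ hmem_take hlt hk.1) hk.2
    · exact heq
    · exact absurd (hjk ▸ hmem_take hlt hj.1) hj.2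

end List

open List

theorem Efun_append_singleton (W : List ℤ) (c : ℤ) :
    Efun (W ++ [c]) = ((W.reverse.takeWhile (· != c)).dedup.length : ℤ) := by
  rw [Efun, getLast?_concat, dropLast_concat]

theorem Efun_append_of_mem (U : List ℤ) {W : List ℤ} {c : ℤ} (hc : c ∈ W) :
    Efun (U ++ (W ++ [c])) = Efun (W ++ [c]) := by
  rw [← append_assoc, Efun_append_singleton, Efun_append_singleton, reverse_append,
    takeWhile_append_of_exists_not _ ⟨c, mem_reverse.2 hc, by simp⟩]

theorem Efun_map_of_injOn {f : ℤ → ℤ} (V : List ℤ) (hf : Set.InjOn f (alph V)) :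
    Efun (V.map f) = Efun V := by
  obtain rfl | ⟨W, c, rfl⟩ := V.eq_nil_or_concat
  · rfl
  have hc : c ∈ alph (W.concat c) := by simp [alph]
  have hW : ∀ x ∈ W.reverse, x ∈ alph (W.concat c) := by simp +contextual [alph]
  have hpred : ∀ x ∈ W.reverse, ((· != f c) ∘ f) x = (x != c) := by
    intro x hx
    rw [Function.comp_apply, Bool.eq_iff_iff, bne_iff_ne, bne_iff_ne, ne_eq, ne_eq,
      hf.eq_iff (hW x hx) hc]
  rw [concat_eq_append, map_append, map_singleton, Efun_append_singleton,
    Efun_append_singleton, ← map_reverse, takeWhile_map, takeWhile_congr hpred,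
    length_dedup_map_of_injOn]
  exact hf.mono fun x hx => hW x (takeWhile_subset _ hx)

theorem seg_map_range (g : ℕ → ℤ) {n a ℓ : ℕ} (h : a + ℓ ≤ n) :
    seg ((range n).map g) (a + 1) ℓ = (range ℓ).map fun j => g (a + j) := by
  rw [seg, Nat.add_sub_cancel, ← map_drop, ← map_take, range_eq_range', drop_range',
    take_range'_of_length_ge (by omega), range'_eq_map_range, map_map]
  simp only [Nat.mul_one, Nat.zero_add, Function.comp_def]

theorem hamming_map_range (g h : ℕ → ℤ) (ℓ : ℕ) :
    hamming ((range ℓ).map g) ((range ℓ).map h) =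
      ((Finset.range ℓ).filter fun j => g j ≠ h j).card := by
  rw [hamming, length_map, length_range]
  congr 1
  refine Finset.filter_congr fun j hj => ?_
  rw [Finset.mem_range] at hj
  simp [getD_eq_getElem?_getD, getElem?_range hj]

theorem take_add_eq_append_take_seg (T : List ℤ) {a ℓ k : ℕ} (hk : k ≤ ℓ) :
    T.take (a + k) = T.take a ++ (seg T (a + 1) ℓ).take k := by
  rw [seg, Nat.add_sub_cancel, take_take, min_eq_left hk, take_add]

theorem Efun_take_eq_of_map_seg {T : List ℤ} {f : ℤ → ℤ} {a ℓ j : ℕ}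
    (hf : Set.InjOn f (alph (seg T (a + 1) ℓ)))
    (hmap : (seg T (a + 1) ℓ).map f = seg T (a + ℓ + 1) ℓ)
    (hj : j < (seg T (a + 1) ℓ).length)
    (hrep : (seg T (a + 1) ℓ).getD j 0 ∈ (seg T (a + 1) ℓ).take j) :
    Efun (T.take (a + j + 1)) = Efun (T.take (a + ℓ + j + 1)) := by
  set X := seg T (a + 1) ℓ
  have hjℓ : j + 1 ≤ ℓ := by
    have : X.length ≤ ℓ := length_take_le _ _
    omega
  have hX : X.take (j + 1) = X.take j ++ [X.getD j 0] := by
    rw [getD_eq_getElem _ 0 hj, take_concat_get']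
  have hprefix : T.take (a + j + 1) = T.take a ++ X.take (j + 1) :=
    take_add_eq_append_take_seg T hjℓ
  have hprefix' : T.take (a + ℓ + j + 1) = T.take (a + ℓ) ++ (X.take (j + 1)).map f := by
    rw [map_take, hmap]
    exact take_add_eq_append_take_seg T hjℓ
  have hmapped : (X.take j ++ [X.getD j 0]).map f = (X.take j).map f ++ [f (X.getD j 0)] := by
    rw [map_append, map_singleton]
  rw [hprefix, hprefix', hX, Efun_append_of_mem _ hrep, hmapped,
    Efun_append_of_mem _ (mem_map_of_mem hrep), ← hmapped, Efun_map_of_injOn]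
  exact hf.mono fun x hx => mem_of_mem_take (hX ▸ hx : x ∈ X.take (j + 1))

theorem psquare_encoding_is_sigma_mismatch_square_general
    (T : List ℤ) (σ i ℓ : ℕ)
    (hσ : T.dedup.length ≤ σ)
    (hi : 1 ≤ i) (hbound : i + 2 * ℓ ≤ T.length + 1)
    (hsq : PMatch (seg T i ℓ) (seg T (i + ℓ) ℓ)) :
    let R : List ℤ := (List.range T.length).map (fun j => Efun (T.take (j + 1)))
    hamming (seg R i ℓ) (seg R (i + ℓ) ℓ) ≤ σ := by
  intro R
  obtain ⟨a, rfl⟩ : ∃ a, i = a + 1 := ⟨i - 1, by omega⟩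
  obtain ⟨-, f, hbij, hmap⟩ := hsq
  set X := seg T (a + 1) ℓ
  have hXlen : X.length = ℓ := by simp only [X, seg, length_take, length_drop]; omega
  rw [add_right_comm] at hmap ⊢
  rw [seg_map_range _ (by omega : a + ℓ ≤ T.length),
    seg_map_range _ (by omega : a + ℓ + ℓ ≤ T.length), hamming_map_range]
  calc _ ≤ ((Finset.range ℓ).filter fun j => X.getD j 0 ∉ X.take j).card := by
        refine Finset.card_le_card fun j => ?_
        simp only [Finset.mem_filter, Finset.mem_range]
        exact fun ⟨hj, hne⟩ => ⟨hj, fun hrep =>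
          hne (Efun_take_eq_of_map_seg hbij.injOn hmap (hj.trans_eq hXlen.symm) hrep)⟩
    _ ≤ X.toFinset.card := hXlen ▸ card_filter_getD_notMem_take_le X 0
    _ ≤ T.toFinset.card := by
        refine Finset.card_le_card fun x hx => mem_toFinset.2 ?_
        exact (drop_subset _ _) (take_subset _ _ (mem_toFinset.1 hx))
    _ ≤ σ := (card_toFinset T).trans_le hσ

/-- if T[i..i+2ℓ) is a parameterized square, then the corresponding
fragment of the prefix-encoding string R is a σ-mismatch square. -/
theorem psquare_encoding_is_sigma_mismatch_square
    (T : List ℤ) (σ i ℓ : ℕ)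
    (hσ : T.dedup.length ≤ σ)
    (hi : 1 ≤ i) (hℓ : 1 ≤ ℓ) (hbound : i + 2 * ℓ ≤ T.length + 1)
    (hsq : PMatch (seg T i ℓ) (seg T (i + ℓ) ℓ)) :
    let R : List ℤ := (List.range T.length).map (fun j => Efun (T.take (j + 1)))
    hamming (seg R i ℓ) (seg R (i + ℓ) ℓ) ≤ σ :=
  psquare_encoding_is_sigma_mismatch_square_general T σ i ℓ hσ hi hbound hsq
end

section
/- Let T be a string and suppose T[i..i+2ℓ) is a parameterized square. If E(T[i+1..i+ℓ]) = E(T[i+ℓ+1..i+2ℓ]), then T[i+1..i+2ℓ] is also a parameterized square. -/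
variable {α : Type*}

namespace List

theorem tail_take_append_getElem (l : List α) {n : ℕ} (hn : 0 < n) (h : n < l.length) :
    (l.take n).tail ++ [l[n]] = l.tail.take n := by
  obtain ⟨m, rfl⟩ : ∃ m, n = m + 1 := ⟨n - 1, by omega⟩
  rw [tail_take_eq_take_tail, ← take_concat_get' l.tail m (by simp; omega), getElem_tail]
  rfl

variable [DecidableEq α]

theorem takeWhile_bne_eq_take_idxOf (M : List α) (c : α) :
    M.takeWhile (· != c) = M.take (M.idxOf c) := by
  rw [takeWhile_eq_take_findIdx_not]
  simp [idxOf, bne]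

theorem card_toFinset_take_idxOf_lt {M : List α} {c : α} (hc : c ∈ M) {k : ℕ}
    (hk : M.idxOf c < k) :
    (M.take (M.idxOf c)).toFinset.card < (M.take k).toFinset.card := by
  have hlt : M.idxOf c < M.length := idxOf_lt_length_iff.2 hc
  refine Finset.card_lt_card <| (Finset.ssubset_iff_of_subset ?_).2 ⟨c, ?_, ?_⟩
  · intro x
    simpa using (take_subset_take_left M hk.le ·)
  · rw [mem_toFinset, mem_take_iff_getElem]
    exact ⟨M.idxOf c, by omega, getElem_idxOf hlt⟩
  · rw [mem_toFinset, ← takeWhile_bne_eq_take_idxOf]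
    intro h
    simpa using mem_takeWhile_imp h

theorem eq_of_card_toFinset_take_idxOf_eq {M : List α} {c d : α} (hc : c ∈ M)
    (h : (M.take (M.idxOf c)).toFinset.card = (M.take (M.idxOf d)).toFinset.card) :
    c = d := by
  rcases lt_trichotomy (M.idxOf c) (M.idxOf d) with hlt | heq | hgt
  · exact absurd h (card_toFinset_take_idxOf_lt hc hlt).ne
  · exact (idxOf_inj hc).1 heq
  · have hd : d ∈ M := idxOf_lt_length_iff.1 (hgt.trans (idxOf_lt_length_iff.2 hc))
    exact absurd h (card_toFinset_take_idxOf_lt hd hgt).ne'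

theorem idxOf_map_of_injOn {β : Type*} [DecidableEq β] {f : α → β} {M : List α}
    (hf : Set.InjOn f {x | x ∈ M}) {c : α} (hc : c ∈ M) :
    (M.map f).idxOf (f c) = M.idxOf c := by
  induction M with
  | nil => simp at hc
  | cons x M ih =>
    have hfx : f x = f c ↔ x = c := hf.eq_iff (by simp) (by simpa using hc)
    by_cases hxc : x = c
    · simp [hxc]
    · have hcM : c ∈ M := by simpa [Ne.symm hxc] using hc
      simp [hfx, hxc, ih (hf.mono fun y hy => mem_cons_of_mem x hy) hcM]

theorem card_toFinset_map_of_injOn {β : Type*} [DecidableEq β] {f : α → β} {M : List α}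
    (hf : Set.InjOn f {x | x ∈ M}) : (M.map f).toFinset.card = M.toFinset.card := by
  have hmap : (M.map f).toFinset = M.toFinset.image f := by ext; simp
  rw [hmap, Finset.card_image_of_injOn (by simpa using hf)]

end List

open List

lemma alph_map (f : ℤ → ℤ) (X : List ℤ) : alph (X.map f) = f '' alph X := by
  ext; simp [alph]

lemma alph_append_singleton (X : List ℤ) (b : ℤ) : alph (X ++ [b]) = insert b (alph X) := by
  ext; simp [alph, or_comm]

lemma pmatch_map_of_injOn {X : List ℤ} {f : ℤ → ℤ} (hf : Set.InjOn f (alph X)) :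
    PMatch X (X.map f) :=
  ⟨(length_map f).symm, f, alph_map f X ▸ hf.bijOn_image, rfl⟩

lemma pmatch_append_singleton_of_notMem {X : List ℤ} {f : ℤ → ℤ} (hf : Set.InjOn f (alph X))
    {b d : ℤ} (hb : b ∉ X) (hd : d ∉ X.map f) :
    PMatch (X ++ [b]) (X.map f ++ [d]) := by
  have hfg : Set.EqOn f (Function.update f b d) (alph X) := fun x hx =>
    (Function.update_of_ne (ne_of_mem_of_not_mem hx hb) _ _).symm
  have hg : Set.InjOn (Function.update f b d) (alph (X ++ [b])) := by
    rw [alph_append_singleton, Set.injOn_insert (show b ∉ alph X from hb), ← hfg.image_eq,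
      ← alph_map]
    exact ⟨hf.congr hfg, by simpa [alph] using hd⟩
  convert pmatch_map_of_injOn hg using 1
  rw [map_append, map_congr_left hfg]
  simp

lemma Efun_append_singleton_s3 (X : List ℤ) (c : ℤ) :
    Efun (X ++ [c]) = (X.reverse.take (X.reverse.idxOf c)).toFinset.card := by
  rw [Efun, getLast?_concat, dropLast_concat, ← takeWhile_bne_eq_take_idxOf, card_toFinset]

lemma pmatch_append_singleton_of_Efun_eq {X : List ℤ} {f : ℤ → ℤ} (hf : Set.InjOn f (alph X))
    {b d : ℤ} (hE : Efun (X ++ [b]) = Efun (X.map f ++ [d])) :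
    PMatch (X ++ [b]) (X.map f ++ [d]) := by
  rw [Efun_append_singleton_s3, Efun_append_singleton_s3, ← map_reverse] at hE
  have hcard := Nat.cast_injective hE
  have hfM : Set.InjOn f {x | x ∈ X.reverse} := by simpa [alph] using hf
  have hcard_map : ∀ k, ((X.reverse.map f).take k).toFinset.card
      = (X.reverse.take k).toFinset.card := fun k => by
    rw [← map_take]
    exact card_toFinset_map_of_injOn (hfM.mono fun x hx => mem_of_mem_take hx)
  by_cases hb : b ∈ X
  · have hbM : b ∈ X.reverse := mem_reverse.2 hb
    have hfb : f b = d := by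
      refine eq_of_card_toFinset_take_idxOf_eq (mem_map_of_mem hbM) ?_
      rw [idxOf_map_of_injOn hfM hbM, hcard_map, hcard]
    subst hfb
    have hg : Set.InjOn f (alph (X ++ [b])) := by
      rwa [alph_append_singleton, Set.insert_eq_of_mem (show b ∈ alph X from hb)]
    simpa using pmatch_map_of_injOn hg
  · have hd : d ∉ X.map f := by
      intro hd
      have hdM : d ∈ X.reverse.map f := by simpa using hd
      have hlt := card_toFinset_take_idxOf_lt hdM (idxOf_lt_length_iff.2 hdM)
      rw [← hcard, idxOf_eq_length_iff.2 (mt mem_reverse.1 hb), take_length, take_length,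
        card_toFinset_map_of_injOn hfM] at hlt
      exact lt_irrefl _ hlt
    exact pmatch_append_singleton_of_notMem hf hb hd

lemma seg_succ (T : List ℤ) {i ℓ : ℕ} (hi : 1 ≤ i) (hℓ : 1 ≤ ℓ) (h : i + ℓ ≤ T.length) :
    seg T (i + 1) ℓ = (seg T i ℓ).tail ++ [T[i + ℓ - 1]] := by
  calc seg T (i + 1) ℓ = (T.drop (i - 1)).tail.take ℓ := by
        rw [seg, tail_drop, Nat.sub_add_cancel hi, Nat.add_sub_cancel]
    _ = _ := by
        rw [← tail_take_append_getElem _ hℓ (by simp; omega), getElem_drop, seg]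
        simp only [Nat.sub_add_comm hi]

/-- if T[i..i+2ℓ) is a p-square and E(T[i+1..i+ℓ]) = E(T[i+ℓ+1..i+2ℓ]),
then T[i+1..i+2ℓ] is a p-square. -/
theorem psquare_shift_of_encoding_eq
    (T : List ℤ) (i ℓ : ℕ)
    (hi : 1 ≤ i) (hℓ : 1 ≤ ℓ) (hbound : i + 2 * ℓ ≤ T.length)
    (hsq : PMatch (seg T i ℓ) (seg T (i + ℓ) ℓ))
    (hE : Efun (seg T (i + 1) ℓ) = Efun (seg T (i + ℓ + 1) ℓ)) :
    PMatch (seg T (i + 1) ℓ) (seg T (i + ℓ + 1) ℓ) := by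
  obtain ⟨-, f, hf, hmap⟩ := hsq
  have hf' : Set.InjOn f (alph (seg T i ℓ).tail) := hf.injOn.mono fun _ => mem_of_mem_tail
  rw [seg_succ T hi hℓ (by omega), seg_succ T (by omega) hℓ (by omega), ← hmap, ← map_tail]
    at hE ⊢
  exact pmatch_append_singleton_of_Efun_eq hf' hE
end
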